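/- Let f_1, …, f_m : ℝ^d → ℝ be differentiable with L-Lipschitz gradients (L-smooth) and f := (1/m)∑_{i=1}^m f_i. Let β > 0, r ≥ 0, and let w, w_1, …, w_m be points and s_1, …, s_m be vectors with ‖s_i‖ ≤ r for each i. Define the update w⁺ := w − (β/m)∑_{i=1}^m ∇f_i(w_i + s_i). Then f(w⁺) ≤ f(w) + (L/2)‖w⁺ − w‖² + βL²r² + (βL²/m)∑_{i=1}^m ‖w_i − w‖² − (β/2)‖∇f(w)‖². -/

import Mathlib

/-! The descent lemma, applied to the average `g` of the `f i` (whose gradient is again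
`L`-Lipschitz), bounds `g w'` by `g w + ⟪∇g w, w' - w⟫ + L/2 ‖w' - w‖²`, where `w' - w = -β P` and
`P` is the average of the perturbed gradients. Polarization gives
`-β ⟪∇g w, P⟫ ≤ -β/2 ‖∇g w‖² + β/2 ‖P - ∇g w‖²`, and the drift `‖P - ∇g w‖²` is at most the average of
`‖∇f i (w i + s i) - ∇f i w‖² ≤ L² ‖(w i - w) + s i‖² ≤ 2L² (‖w i - w‖² + r²)`. -/

open Finset InnerProductSpace

section InnerProductSpace

variable {E : Type*} [NormedAddCommGroup E] [InnerProductSpace ℝ E] [CompleteSpace E]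

theorem hasDerivAt_comp_add_smul {g : E → ℝ} {x v : E} {t : ℝ}
    (hg : DifferentiableAt ℝ g (x + t • v)) :
    HasDerivAt (fun t : ℝ => g (x + t • v)) ⟪gradient g (x + t • v), v⟫_ℝ t := by
  have hline : HasDerivAt (fun t : ℝ => x + t • v) v t := by
    simpa using ((hasDerivAt_id t).smul_const v).const_add x
  have h := hg.hasGradientAt.hasFDerivAt.comp_hasDerivAt t hline
  rwa [toDual_apply_apply] at h

theorem le_add_inner_gradient_add_half_mul_sq {g : E → ℝ} {C : ℝ} (hg : Differentiable ℝ g)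
    (hC : ∀ x y, ‖gradient g x - gradient g y‖ ≤ C * ‖x - y‖) (x y : E) :
    g y ≤ g x + ⟪gradient g x, y - x⟫_ℝ + C / 2 * ‖y - x‖ ^ 2 := by
  set v := y - x
  set A := ⟪gradient g x, v⟫_ℝ
  -- The gap between `g` and its quadratic majorant along the segment is antitone: its derivative
  -- is `⟪∇g (x + t • v) - ∇g x, v⟫ - C t ‖v‖² ≤ 0`.
  let φ : ℝ → ℝ := fun t => g (x + t • v) - (t * A + C / 2 * ‖v‖ ^ 2 * t ^ 2)
  have hφ : ∀ t, HasDerivAt φ (⟪gradient g (x + t • v), v⟫_ℝ - (A + C * ‖v‖ ^ 2 * t)) t := by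
    intro t
    have hquad : HasDerivAt (fun t : ℝ => t * A + C / 2 * ‖v‖ ^ 2 * t ^ 2)
        (A + C * ‖v‖ ^ 2 * t) t := by
      refine ((hasDerivAt_mul_const A).fun_add
        ((hasDerivAt_pow 2 t).const_mul (C / 2 * ‖v‖ ^ 2))).congr_deriv ?_
      norm_num; ring
    exact (hasDerivAt_comp_add_smul (hg _)).sub hquad
  have hφ_anti : AntitoneOn φ (Set.Icc 0 1) := by
    refine antitoneOn_of_deriv_nonpos (convex_Icc 0 1)
      (continuous_iff_continuousAt.2 fun t => (hφ t).continuousAt).continuousOn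
      (fun t _ => (hφ t).differentiableAt.differentiableWithinAt) fun t ht => ?_
    rw [interior_Icc] at ht
    have hgap : ⟪gradient g (x + t • v) - gradient g x, v⟫_ℝ ≤ C * t * ‖v‖ ^ 2 :=
      calc ⟪gradient g (x + t • v) - gradient g x, v⟫_ℝ
          ≤ ‖gradient g (x + t • v) - gradient g x‖ * ‖v‖ := real_inner_le_norm _ _
        _ ≤ C * ‖x + t • v - x‖ * ‖v‖ := by gcongr; exact hC _ _
        _ = C * t * ‖v‖ ^ 2 := by
          rw [add_sub_cancel_left, norm_smul, Real.norm_of_nonneg ht.1.le]; ring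
    rw [(hφ t).deriv]
    rw [inner_sub_left] at hgap
    linarith
  have h01 := hφ_anti (Set.left_mem_Icc.2 zero_le_one) (Set.right_mem_Icc.2 zero_le_one)
    zero_le_one
  have hφ0 : φ 0 = g x := by simp [φ]
  have hφ1 : φ 1 = g y - (A + C / 2 * ‖y - x‖ ^ 2) := by simp [φ, v]
  linarith

theorem gradient_const_mul_sum {ι : Type*} [Fintype ι] (c : ℝ) {f : ι → E → ℝ}
    (hf : ∀ i, Differentiable ℝ (f i)) (x : E) :
    gradient (fun y => c * ∑ i, f i y) x = c • ∑ i, gradient (f i) x := by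
  refine HasGradientAt.gradient ?_
  rw [hasGradientAt_iff_hasFDerivAt, map_smul, map_sum]
  exact (HasFDerivAt.fun_sum fun i _ => (hf i x).hasGradientAt.hasFDerivAt).const_mul c

end InnerProductSpace

theorem sq_norm_apply_add_sub_le {D F : Type*} [SeminormedAddCommGroup D]
    [SeminormedAddCommGroup F] {G : D → F} {L r : ℝ} (hG : ∀ x y, ‖G x - G y‖ ≤ L * ‖x - y‖)
    {s : D} (hs : ‖s‖ ≤ r) (x y : D) :
    ‖G (x + s) - G y‖ ^ 2 ≤ 2 * L ^ 2 * (‖x - y‖ ^ 2 + r ^ 2) :=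
  calc ‖G (x + s) - G y‖ ^ 2
      ≤ (L * ‖(x - y) + s‖) ^ 2 := by
        gcongr; simpa [add_sub_right_comm] using hG (x + s) y
    _ ≤ L ^ 2 * (‖x - y‖ + ‖s‖) ^ 2 := by rw [mul_pow]; gcongr; exact norm_add_le _ _
    _ ≤ L ^ 2 * (2 * (‖x - y‖ ^ 2 + ‖s‖ ^ 2)) := by gcongr; exact add_sq_le
    _ ≤ 2 * L ^ 2 * (‖x - y‖ ^ 2 + r ^ 2) := by
        have := pow_le_pow_left₀ (norm_nonneg _) hs 2; nlinarith [sq_nonneg L]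

section Averages

variable {ι E : Type*} [Fintype ι] [SeminormedAddCommGroup E] [NormedSpace ℝ E]

theorem norm_inv_card_smul_sum_le [Nonempty ι] {a : ι → E} {C : ℝ} (ha : ∀ i, ‖a i‖ ≤ C) :
    ‖(Fintype.card ι : ℝ)⁻¹ • ∑ i, a i‖ ≤ C := by
  have hcard : (0 : ℝ) < Fintype.card ι := Nat.cast_pos.2 Fintype.card_pos
  rw [norm_smul, norm_inv, Real.norm_natCast, inv_mul_le_iff₀ hcard]
  calc ‖∑ i, a i‖ ≤ ∑ i, ‖a i‖ := norm_sum_le _ _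
    _ ≤ ∑ _i : ι, C := sum_le_sum fun i _ => ha i
    _ = Fintype.card ι * C := by simp

theorem sq_norm_inv_card_smul_sum_le (a : ι → E) :
    ‖(Fintype.card ι : ℝ)⁻¹ • ∑ i, a i‖ ^ 2 ≤ (Fintype.card ι : ℝ)⁻¹ * ∑ i, ‖a i‖ ^ 2 := by
  have hsum : ‖∑ i, a i‖ ^ 2 ≤ Fintype.card ι * ∑ i, ‖a i‖ ^ 2 :=
    calc ‖∑ i, a i‖ ^ 2 ≤ (∑ i, ‖a i‖) ^ 2 := by gcongr; exact norm_sum_le _ _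
      _ ≤ Fintype.card ι * ∑ i, ‖a i‖ ^ 2 := by
        simpa only [card_univ] using sq_sum_le_card_mul_sum_sq (s := univ) (f := fun i => ‖a i‖)
  rw [norm_smul, mul_pow, norm_inv, Real.norm_natCast]
  calc (Fintype.card ι : ℝ)⁻¹ ^ 2 * ‖∑ i, a i‖ ^ 2
      ≤ (Fintype.card ι : ℝ)⁻¹ ^ 2 * (Fintype.card ι * ∑ i, ‖a i‖ ^ 2) := by gcongr
    _ = (Fintype.card ι : ℝ)⁻¹ * ∑ i, ‖a i‖ ^ 2 := by
      rcases eq_or_ne (Fintype.card ι : ℝ) 0 with h | h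
      · simp [h]
      · field_simp

theorem sq_norm_inv_card_smul_sum_sub_le {D : Type*} [SeminormedAddCommGroup D] [Nonempty ι]
    {G : ι → D → E} {L r : ℝ}
    (hG : ∀ i x y, ‖G i x - G i y‖ ≤ L * ‖x - y‖) {x s : ι → D} (hs : ∀ i, ‖s i‖ ≤ r) (y : D) :
    ‖(Fintype.card ι : ℝ)⁻¹ • ∑ i, (G i (x i + s i) - G i y)‖ ^ 2
      ≤ 2 * L ^ 2 * r ^ 2 + (2 * L ^ 2 / Fintype.card ι) * ∑ i, ‖x i - y‖ ^ 2 :=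
  calc ‖(Fintype.card ι : ℝ)⁻¹ • ∑ i, (G i (x i + s i) - G i y)‖ ^ 2
      ≤ (Fintype.card ι : ℝ)⁻¹ * ∑ i, ‖G i (x i + s i) - G i y‖ ^ 2 :=
        sq_norm_inv_card_smul_sum_le _
    _ ≤ (Fintype.card ι : ℝ)⁻¹ * ∑ i, 2 * L ^ 2 * (‖x i - y‖ ^ 2 + r ^ 2) := by
        gcongr with i; exact sq_norm_apply_add_sub_le (hG i) (hs i) _ _
    _ = 2 * L ^ 2 * r ^ 2 + (2 * L ^ 2 / Fintype.card ι) * ∑ i, ‖x i - y‖ ^ 2 := by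
        simp only [mul_add, sum_add_distrib, ← mul_sum, sum_const, card_univ, nsmul_eq_mul]
        field_simp [Fintype.card_ne_zero]
        ring

end Averages

theorem one_round_descent_general
    {d m : ℕ} (hm : 0 < m) (L β r : ℝ) (hβ : 0 < β)
    (f : Fin m → EuclideanSpace ℝ (Fin d) → ℝ)
    (hdiff : ∀ i, Differentiable ℝ (f i))
    (hsmooth : ∀ i x y, ‖gradient (f i) x - gradient (f i) y‖ ≤ L * ‖x - y‖)
    (w : EuclideanSpace ℝ (Fin d))
    (wi s : Fin m → EuclideanSpace ℝ (Fin d))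
    (hs : ∀ i, ‖s i‖ ≤ r) :
    (fun v => (m : ℝ)⁻¹ * ∑ i, f i v)
        (w - (β / (m : ℝ)) • ∑ i, gradient (f i) (wi i + s i))
      ≤ (m : ℝ)⁻¹ * ∑ i, f i w
        + (L / 2) * ‖(w - (β / (m : ℝ)) • ∑ i, gradient (f i) (wi i + s i)) - w‖ ^ 2
        + β * L ^ 2 * r ^ 2
        + (β * L ^ 2 / (m : ℝ)) * ∑ i, ‖wi i - w‖ ^ 2
        - (β / 2) * ‖gradient (fun v => (m : ℝ)⁻¹ * ∑ i, f i v) w‖ ^ 2 := by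
  have : Nonempty (Fin m) := ⟨⟨0, hm⟩⟩
  set g := fun v => (m : ℝ)⁻¹ * ∑ i, f i v
  set w' := w - (β / (m : ℝ)) • ∑ i, gradient (f i) (wi i + s i)
  set P := (m : ℝ)⁻¹ • ∑ i, gradient (f i) (wi i + s i)
  set G := gradient g w
  have hgrad (x) : gradient g x = (m : ℝ)⁻¹ • ∑ i, gradient (f i) x :=
    gradient_const_mul_sum _ hdiff x
  have hg_smooth (x y) : ‖gradient g x - gradient g y‖ ≤ L * ‖x - y‖ := by
    rw [hgrad, hgrad, ← smul_sub, ← sum_sub_distrib]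
    simpa using norm_inv_card_smul_sum_le fun i => hsmooth i x y
  have hstep : w' - w = -(β • P) := by
    simp only [w', P, smul_smul, div_eq_mul_inv, sub_sub_cancel_left]
  have hdrift : ‖P - G‖ ^ 2 ≤ 2 * L ^ 2 * r ^ 2 + (2 * L ^ 2 / m) * ∑ i, ‖wi i - w‖ ^ 2 := by
    have h := sq_norm_inv_card_smul_sum_sub_le (x := wi) hsmooth hs w
    rwa [sum_sub_distrib, smul_sub, Fintype.card_fin, ← hgrad] at h
  have hpolar : ‖G‖ ^ 2 - ‖P - G‖ ^ 2 ≤ 2 * ⟪G, P⟫_ℝ := by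
    rw [norm_sub_sq_real, real_inner_comm]; linarith [sq_nonneg ‖P‖]
  have hdescent := le_add_inner_gradient_add_half_mul_sq
    (Differentiable.const_mul (Differentiable.fun_sum fun i _ => hdiff i) _) hg_smooth w w'
  rw [hstep, inner_neg_right, real_inner_smul_right] at hdescent
  rw [hstep]
  linear_combination hdescent + (β / 2) * hpolar + (β / 2) * hdrift

/-- Deterministic one-round descent inequality of FedSMOO (Theorem 4.1 proof):
for `L`-smooth `f i`, `f = (1/m) ∑ i, f i`, perturbations `‖s i‖ ≤ r`, and the
global update `w⁺ = w - (β/m) ∑ i, ∇f i (w i + s i)`,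
`f(w⁺) ≤ f(w) + (L/2)‖w⁺ - w‖² + βL²r² + (βL²/m) ∑ i, ‖w i - w‖² - (β/2)‖∇f(w)‖²`. -/
theorem one_round_descent
    {d m : ℕ} (hm : 0 < m) (L β r : ℝ) (hβ : 0 < β) (hr : 0 ≤ r)
    (f : Fin m → EuclideanSpace ℝ (Fin d) → ℝ)
    (hdiff : ∀ i, Differentiable ℝ (f i))
    (hsmooth : ∀ i x y, ‖gradient (f i) x - gradient (f i) y‖ ≤ L * ‖x - y‖)
    (w : EuclideanSpace ℝ (Fin d))
    (wi s : Fin m → EuclideanSpace ℝ (Fin d))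
    (hs : ∀ i, ‖s i‖ ≤ r) :
    (fun v => (m : ℝ)⁻¹ * ∑ i, f i v)
        (w - (β / (m : ℝ)) • ∑ i, gradient (f i) (wi i + s i))
      ≤ (m : ℝ)⁻¹ * ∑ i, f i w
        + (L / 2) * ‖(w - (β / (m : ℝ)) • ∑ i, gradient (f i) (wi i + s i)) - w‖ ^ 2
        + β * L ^ 2 * r ^ 2
        + (β * L ^ 2 / (m : ℝ)) * ∑ i, ‖wi i - w‖ ^ 2
        - (β / 2) * ‖gradient (fun v => (m : ℝ)⁻¹ * ∑ i, f i v) w‖ ^ 2 :=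
  one_round_descent_general hm L β r hβ f hdiff hsmooth w wi s hs
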